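/- arXiv:2402.05141 — 7 statements merged into one kernel-verified Lean document; each statement's English description precedes it below -/
import Mathlib

section
/- For each x = (x_1, …, x_p) ∈ R define the tensor d^x by (d^x)_z = ∏_{k=1}^p β^{x_k}_{z_k}, where β^{x_k} ∈ ℝ^{r_k} is the all-ones vector if x_k = 1 and the vector with -1 in position x_k and 1 elsewhere if x_k ≠ 1. Then each d^x ∈ S_1, and the family {d^x}_{x ∈ R} of π = r_1·⋯·r_p tensors is linearly independent in ℝ^{r_1 × ⋯ × r_p}. -/
open Set Pointwise

noncomputable section

/-- The set `B_λ` of rank-1 tensors whose factor entries lie in `[-1,1]`, scaled by `λ`. -/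
def setB (p : ℕ) (r : Fin p → ℕ) (lam : ℝ) :
    Set (((i : Fin p) → Fin (r i)) → ℝ) :=
  {ψ | ∃ θ : (k : Fin p) → Fin (r k) → ℝ,
    (∀ k j, -1 ≤ θ k j ∧ θ k j ≤ 1) ∧
    ∀ x, ψ x = lam * ∏ k, θ k (x k)}

/-- The set `S_λ` of rank-1 tensors whose factor entries lie in `{-1,1}`, scaled by `λ`. -/
def setS (p : ℕ) (r : Fin p → ℕ) (lam : ℝ) :
    Set (((i : Fin p) → Fin (r i)) → ℝ) :=
  {ψ | ∃ θ : (k : Fin p) → Fin (r k) → ℝ,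
    (∀ k j, θ k j = -1 ∨ θ k j = 1) ∧
    ∀ x, ψ x = lam * ∏ k, θ k (x k)}

/-- `C_λ := conv(S_λ)`. -/
def setC (p : ℕ) (r : Fin p → ℕ) (lam : ℝ) :
    Set (((i : Fin p) → Fin (r i)) → ℝ) :=
  convexHull ℝ (setS p r lam)

/-- The gauge norm `‖ψ‖_± = inf {λ ≥ 0 : ψ ∈ λ • C_1}`. -/
def gaugeNorm {p : ℕ} {r : Fin p → ℕ} (ψ : ((i : Fin p) → Fin (r i)) → ℝ) : ℝ :=
  sInf {lam : ℝ | 0 ≤ lam ∧ ψ ∈ lam • setC p r 1}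

/-- The max norm `‖ψ‖_max = max_x |ψ_x|`. -/
def maxNorm {p : ℕ} {r : Fin p → ℕ} (ψ : ((i : Fin p) → Fin (r i)) → ℝ) : ℝ :=
  ⨆ x, |ψ x|

noncomputable def auxm (N : ℕ) (hN : 1 ≤ N) (a j : Fin N) : ℝ :=
  if a = ⟨0, hN⟩ then 1 else if j = a then -1 else 1

noncomputable def auxn (N : ℕ) (hN : 1 ≤ N) (j b : Fin N) : ℝ :=
  if b = ⟨0, hN⟩ then (if j = ⟨0, hN⟩ then ((3 : ℝ) - N)/2 else 1/2)
  else (if j = ⟨0, hN⟩ then 1/2 else if j = b then -1/2 else 0)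

lemma sum_delta_form {N : ℕ} (z s : Fin N) (c₁ c₂ c₃ : ℝ) :
    ∑ j : Fin N, (c₁ * (if j = z then (1:ℝ) else 0) + c₂ * (if j = s then (1:ℝ) else 0) + c₃)
      = c₁ + c₂ + N * c₃ := by
  simp [Finset.sum_add_distrib, ← Finset.mul_sum, Finset.sum_ite_eq', Finset.card_univ,
    mul_comm]

lemma aux_key (N : ℕ) (hN : 1 ≤ N) (a b : Fin N) :
    ∑ j, auxm N hN a j * auxn N hN j b = if a = b then 1 else 0 := by
  by_cases ha : a = (⟨0, hN⟩ : Fin N) <;> by_cases hb : b = (⟨0, hN⟩ : Fin N)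
  · have h1 : ∀ j : Fin N, auxm N hN a j * auxn N hN j b =
        (((3:ℝ) - N)/2 - 1/2) * (if j = (⟨0, hN⟩ : Fin N) then (1:ℝ) else 0)
          + 0 * (if j = (⟨0, hN⟩ : Fin N) then (1:ℝ) else 0) + 1/2 := by
      intro j; simp only [auxm, auxn, ha, hb, if_pos rfl]
      split_ifs <;> subst_vars <;> first | (exact absurd rfl (by assumption)) | ring | simp_all
    rw [Finset.sum_congr rfl fun j _ => h1 j, sum_delta_form, if_pos (ha.trans hb.symm)]
    ring
  · have h1 : ∀ j : Fin N, auxm N hN a j * auxn N hN j b =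
        (1/2) * (if j = (⟨0, hN⟩ : Fin N) then (1:ℝ) else 0)
          + (-1/2) * (if j = b then (1:ℝ) else 0) + 0 := by
      intro j; simp only [auxm, auxn, ha, if_pos rfl, if_neg hb]
      split_ifs <;> subst_vars <;> first | (exact absurd rfl (by assumption)) | ring | simp_all
    rw [Finset.sum_congr rfl fun j _ => h1 j, sum_delta_form,
      if_neg (fun h => hb (h.symm.trans ha))]
    ring
  · have h1 : ∀ j : Fin N, auxm N hN a j * auxn N hN j b =
        (((2:ℝ) - N)/2) * (if j = (⟨0, hN⟩ : Fin N) then (1:ℝ) else 0)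
          + (-1) * (if j = a then (1:ℝ) else 0) + 1/2 := by
      intro j; simp only [auxm, auxn, if_neg ha, hb, if_pos rfl]
      split_ifs <;> subst_vars <;> first | (exact absurd rfl (by assumption)) | ring | simp_all
    rw [Finset.sum_congr rfl fun j _ => h1 j, sum_delta_form,
      if_neg (fun h => ha (h.trans hb))]
    ring
  · by_cases hab : a = b
    · have h1 : ∀ j : Fin N, auxm N hN a j * auxn N hN j b =
          (1/2) * (if j = (⟨0, hN⟩ : Fin N) then (1:ℝ) else 0)
            + (1/2) * (if j = a then (1:ℝ) else 0) + 0 := by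
        intro j; simp only [auxm, auxn, if_neg ha, if_neg hb, ← hab]
        split_ifs <;> subst_vars <;> first | (exact absurd rfl (by assumption)) | ring | simp_all
      rw [Finset.sum_congr rfl fun j _ => h1 j, sum_delta_form, if_pos hab]
      ring
    · have h1 : ∀ j : Fin N, auxm N hN a j * auxn N hN j b =
          (1/2) * (if j = (⟨0, hN⟩ : Fin N) then (1:ℝ) else 0)
            + (-1/2) * (if j = b then (1:ℝ) else 0) + 0 := by
        intro j; simp only [auxm, auxn, if_neg ha, if_neg hb]
        split_ifs <;> subst_vars <;> first | (exact absurd rfl (by assumption)) | ring | simp_all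
      rw [Finset.sum_congr rfl fun j _ => h1 j, sum_delta_form, if_neg hab]
      ring

/-- the tensors `d^x`, with entries `(d^x)_z = ∏_k β^{x_k}_{z_k}` where
`β^{x_k}` is all-ones if `x_k` is the first index and has a single `-1` in position
`x_k` otherwise, all lie in `S_1` and form a linearly independent family of
`π = ∏ r_i` tensors. -/
theorem simplex_vertices_mem_setS_and_linearIndependent (p : ℕ) (hp : 1 ≤ p)
    (r : Fin p → ℕ) (hr : ∀ i, 1 ≤ r i) :
    (∀ x : (i : Fin p) → Fin (r i),
        (fun z : (i : Fin p) → Fin (r i) =>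
          ∏ k, (if x k = (⟨0, hr k⟩ : Fin (r k)) then (1 : ℝ)
            else if z k = x k then -1 else 1)) ∈ setS p r 1) ∧
      LinearIndependent ℝ (fun x : (i : Fin p) → Fin (r i) =>
        fun z : (i : Fin p) → Fin (r i) =>
          ∏ k, (if x k = (⟨0, hr k⟩ : Fin (r k)) then (1 : ℝ)
            else if z k = x k then -1 else 1)) := by
  constructor
  · intro x
    refine ⟨fun k j => if x k = (⟨0, hr k⟩ : Fin (r k)) then (1:ℝ)
      else if j = x k then -1 else 1, fun k j => ?_, fun z => ?_⟩
    · dsimp only; split_ifs <;> simp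
    · simp only [one_mul]
  · have hd : (fun x : (i : Fin p) → Fin (r i) =>
        fun z : (i : Fin p) → Fin (r i) =>
          ∏ k, (if x k = (⟨0, hr k⟩ : Fin (r k)) then (1 : ℝ)
            else if z k = x k then -1 else 1))
        = fun x z => ∏ k, auxm (r k) (hr k) (x k) (z k) := rfl
    rw [hd, Fintype.linearIndependent_iff]
    intro c hc y
    have hpt : ∀ z : (i : Fin p) → Fin (r i), ∑ x : (i : Fin p) → Fin (r i), c x * ∏ k, auxm (r k) (hr k) (x k) (z k) = 0 := by
      intro z
      have := congrFun hc z
      simpa [Finset.sum_apply] using this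
    have key2 : ∀ x : (i : Fin p) → Fin (r i),
        ∑ z : (i : Fin p) → Fin (r i), (∏ k, auxm (r k) (hr k) (x k) (z k)) * ∏ k, auxn (r k) (hr k) (z k) (y k)
          = if x = y then 1 else 0 := by
      intro x
      have h1 : ∀ z : (i : Fin p) → Fin (r i),
          (∏ k, auxm (r k) (hr k) (x k) (z k)) * ∏ k, auxn (r k) (hr k) (z k) (y k)
            = ∏ k, (auxm (r k) (hr k) (x k) (z k) * auxn (r k) (hr k) (z k) (y k)) :=
        fun z => (Finset.prod_mul_distrib).symm
      rw [Finset.sum_congr rfl fun z _ => h1 z]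
      have h2 : ∑ z : (i : Fin p) → Fin (r i),
          ∏ k, (auxm (r k) (hr k) (x k) (z k) * auxn (r k) (hr k) (z k) (y k))
          = ∏ k, ∑ j, auxm (r k) (hr k) (x k) j * auxn (r k) (hr k) j (y k) := by
        rw [Finset.prod_univ_sum]
        rw [Fintype.piFinset_univ]
      rw [h2]
      have h3 : ∀ k, ∑ j, auxm (r k) (hr k) (x k) j * auxn (r k) (hr k) j (y k)
          = if x k = y k then 1 else 0 := fun k => aux_key _ _ _ _
      rw [Finset.prod_congr rfl fun k _ => h3 k]
      simp [Finset.prod_boole, funext_iff]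
    calc c y = ∑ x, c x * (if x = y then 1 else 0) := by simp
      _ = ∑ x, c x * ∑ z : (i : Fin p) → Fin (r i), (∏ k, auxm (r k) (hr k) (x k) (z k))
            * ∏ k, auxn (r k) (hr k) (z k) (y k) := by
          exact Finset.sum_congr rfl fun x _ => by rw [key2 x]
      _ = ∑ z : (i : Fin p) → Fin (r i), (∑ x, c x * ∏ k, auxm (r k) (hr k) (x k) (z k))
            * ∏ k, auxn (r k) (hr k) (z k) (y k) := by
          simp only [Finset.mul_sum, Finset.sum_mul]
          rw [Finset.sum_comm]
          exact Finset.sum_congr rfl fun z _ => Finset.sum_congr rfl fun x _ => by ring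
      _ = 0 := by simp [hpt]
end
end

section
/- The convex polytope C_1 has nonempty interior in ℝ^{r_1 × ⋯ × r_p} (equipped with its standard topology). -/
open Set Pointwise

noncomputable section

lemma neg_mem_setS {p : ℕ} (hp : 1 ≤ p) {r : Fin p → ℕ} {ψ : ((i : Fin p) → Fin (r i)) → ℝ}
    (h : ψ ∈ setS p r 1) : -ψ ∈ setS p r 1 := by
  obtain ⟨θ, hθ, hψ⟩ := h
  refine ⟨fun k j => if k = ⟨0, hp⟩ then -θ k j else θ k j, ?_, ?_⟩
  · intro k j; dsimp only; rcases hθ k j with h | h <;> split <;> simp [h]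
  · intro x
    have : (∏ k, if k = ⟨0, hp⟩ then -θ k (x k) else θ k (x k))
        = -∏ k, θ k (x k) := by
      rw [show (fun k => if k = ⟨0, hp⟩ then -θ k (x k) else θ k (x k))
          = fun k => (if k = ⟨0, hp⟩ then (-1 : ℝ) else 1) * θ k (x k) by
        funext k; split <;> ring]
      rw [Finset.prod_mul_distrib,
        Finset.prod_ite_eq' Finset.univ (⟨0, hp⟩ : Fin p) (fun _ => (-1:ℝ))]
      simp
    simp [hψ x, this]

lemma span_setS (p : ℕ) (r : Fin p → ℕ) :
    Submodule.span ℝ (setS p r 1) = ⊤ := by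
  rw [eq_top_iff]
  intro f _
  rw [pi_eq_sum_univ f]
  refine Submodule.sum_mem _ fun x _ => Submodule.smul_mem _ _ ?_
  -- the basis tensor at x
  set ψT : Finset (Fin p) → (((i : Fin p) → Fin (r i)) → ℝ) :=
    fun T y => ∏ k, (if k ∈ T then (if y k = x k then (1:ℝ) else -1) else 1) with hψT
  have hmem : ∀ T, ψT T ∈ setS p r 1 := by
    intro T
    refine ⟨fun k j => if k ∈ T then (if j = x k then (1:ℝ) else -1) else 1, ?_, ?_⟩
    · intro k j; dsimp only; split <;> [skip; simp]; split <;> simp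
    · intro y; simp [hψT]
  have hsum : ∑ T : Finset (Fin p), ψT T
      = fun y => ∏ k, ((if y k = x k then (1:ℝ) else -1) + 1) := by
    funext y
    rw [Fintype.prod_add]
    rw [Finset.sum_apply]
    refine Finset.sum_congr rfl fun T _ => ?_
    simp only [hψT]
    rw [Finset.prod_ite_mem Finset.univ T, Finset.univ_inter, Finset.prod_const_one, mul_one]
  have hval : (fun y => ∏ k, ((if y k = x k then (1:ℝ) else -1) + 1))
      = fun j => if x = j then (2:ℝ)^p else 0 := by
    funext y
    by_cases h : x = y
    · subst h; norm_num
    · have : ∃ k, y k ≠ x k := by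
        by_contra hc
        push_neg at hc
        exact h (funext fun k => (hc k).symm)
      obtain ⟨k, hk⟩ := this
      rw [if_neg h]
      exact Finset.prod_eq_zero (Finset.mem_univ k) (by simp [hk])
  have key : (fun j => if x = j then (1:ℝ) else 0)
      = ((2:ℝ)^p)⁻¹ • ∑ T : Finset (Fin p), ψT T := by
    rw [hsum, hval]
    funext j
    by_cases h : x = j <;> simp [h]
  rw [key]
  exact Submodule.smul_mem _ _ (Submodule.sum_mem _ fun T _ =>
    Submodule.subset_span (hmem T))

/-- `C_1` has nonempty interior. -/
theorem setC_interior_nonempty (p : ℕ) (hp : 1 ≤ p) (r : Fin p → ℕ) (hr : ∀ i, 1 ≤ r i) :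
    (interior (setC p r 1)).Nonempty := by
  have hconv : Convex ℝ (setC p r 1) := convex_convexHull ℝ _
  rw [hconv.interior_nonempty_iff_affineSpan_eq_top]
  rw [setC, affineSpan_convexHull]
  have hne : (setS p r 1).Nonempty := by
    refine ⟨fun _ => 1, fun _ _ => 1, fun _ _ => Or.inr rfl, fun x => by simp⟩
  rw [AffineSubspace.affineSpan_eq_top_iff_vectorSpan_eq_top_of_nonempty ℝ _ _ hne]
  rw [eq_top_iff, ← span_setS p r, Submodule.span_le]
  intro ψ hψ
  have h2 : ψ - (-ψ) ∈ vectorSpan ℝ (setS p r 1) :=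
    vsub_mem_vectorSpan ℝ hψ (neg_mem_setS hp hψ)
  have : ψ = (2:ℝ)⁻¹ • (ψ - (-ψ)) := by
    funext y; simp; ring
  rw [this]
  exact Submodule.smul_mem _ _ h2
end
end

section
/- The gauge function ‖ψ‖_± := inf{λ ≥ 0 : ψ ∈ λ • C_1} is a norm on ℝ^{r_1 × ⋯ × r_p}: for all tensors ψ, φ and all a ∈ ℝ, (i) ‖ψ‖_± = 0 if and only if ψ = 0, (ii) ‖a·ψ‖_± = |a|·‖ψ‖_±, and (iii) ‖ψ + φ‖_± ≤ ‖ψ‖_± + ‖φ‖_±; moreover ‖ψ‖_± is finite (the infimum is over a nonempty set) for every ψ. -/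
open Set Pointwise

noncomputable section

namespace GaugeAux

abbrev Idx (p : ℕ) (r : Fin p → ℕ) := (i : Fin p) → Fin (r i)

variable {p : ℕ} {r : Fin p → ℕ}

lemma one_mem_S : (fun _ => (1:ℝ)) ∈ setS p r 1 :=
  ⟨fun _ _ => 1, fun _ _ => Or.inr rfl, fun x => by simp⟩

lemma convex_C : Convex ℝ (setC p r 1) := convex_convexHull ℝ _

lemma S_subset_C : setS p r 1 ⊆ setC p r 1 := subset_convexHull ℝ _

lemma neg_mem_S (hp : 1 ≤ p) {s} (hs : s ∈ setS p r 1) : -s ∈ setS p r 1 := by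
  obtain ⟨θ, hθ, h⟩ := hs
  set k₀ : Fin p := ⟨0, hp⟩
  refine ⟨fun k j => if k = k₀ then -θ k j else θ k j, ?_, ?_⟩
  · intro k j; rcases hθ k j with h' | h' <;> by_cases hk : k = k₀ <;> simp [hk, h']
  · intro x
    have h2 : ∀ k : Fin p, (if k = k₀ then -θ k (x k) else θ k (x k))
        = (if k = k₀ then (-1:ℝ) else 1) * θ k (x k) := by
      intro k; by_cases hk : k = k₀ <;> simp [hk]
    simp only [Pi.neg_apply, h, h2, Finset.prod_mul_distrib]
    rw [Finset.prod_ite_eq' Finset.univ k₀ (fun _ => (-1:ℝ))]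
    simp

lemma neg_mem_C (hp : 1 ≤ p) {ψ} (hψ : ψ ∈ setC p r 1) : -ψ ∈ setC p r 1 := by
  have hsub : setC p r 1 ⊆ -setC p r 1 := by
    apply convexHull_min _ (convex_C.neg)
    intro s hs
    rw [Set.mem_neg]
    exact S_subset_C (neg_mem_S hp hs)
  simpa using hsub hψ

lemma zero_mem_C (hp : 1 ≤ p) : (0 : ((i : Fin p) → Fin (r i)) → ℝ) ∈ setC p r 1 := by
  have h1 : (fun _ => (1:ℝ)) ∈ setC p r 1 := S_subset_C one_mem_S
  have h2 := neg_mem_C hp h1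
  have h3 := convex_C h1 h2 (by norm_num : (0:ℝ) ≤ 1/2) (by norm_num : (0:ℝ) ≤ 1/2) (by norm_num)
  have h4 : (1/2:ℝ) • (fun _ => (1:ℝ)) + (1/2:ℝ) • (-(fun _ => (1:ℝ)))
      = (0 : ((i : Fin p) → Fin (r i)) → ℝ) := by
    funext y
    simp only [Pi.add_apply, Pi.smul_apply, Pi.neg_apply, smul_eq_mul, Pi.zero_apply]
    ring
  rwa [h4] at h3

lemma abs_le_one_of_mem_C {ψ} (hψ : ψ ∈ setC p r 1) (x : (i : Fin p) → Fin (r i)) :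
    |ψ x| ≤ 1 := by
  have hsub : setC p r 1 ⊆ {φ | ∀ x, |φ x| ≤ 1} := by
    apply convexHull_min
    · rintro φ ⟨θ, hθ, hφ⟩ x
      rw [hφ x, one_mul, Finset.abs_prod]
      refine le_of_eq (Finset.prod_eq_one fun k _ => ?_)
      rcases hθ k (x k) with h | h <;> simp [h]
    · intro a ha b hb s t hs ht hst x
      have : |(s • a + t • b) x| = |s * a x + t * b x| := rfl
      rw [this]
      calc |s * a x + t * b x| ≤ |s * a x| + |t * b x| := abs_add_le _ _
        _ = s * |a x| + t * |b x| := by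
            rw [abs_mul, abs_mul, abs_of_nonneg hs, abs_of_nonneg ht]
        _ ≤ s * 1 + t * 1 := by
            gcongr; exacts [ha x, hb x]
        _ = 1 := by rw [mul_one, mul_one, hst]
  exact hsub hψ x

lemma prod_mem_C (hp : 1 ≤ p) (t : Finset ((k : Fin p) × Fin (r k))) :
    ∀ θ : ((k : Fin p) × Fin (r k)) → ℝ,
      (∀ i, -1 ≤ θ i ∧ θ i ≤ 1) → (∀ i ∉ t, θ i = -1 ∨ θ i = 1) →
      (fun y => ∏ k, θ ⟨k, y k⟩) ∈ setC p r 1 := by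
  induction t using Finset.induction_on with
  | empty =>
      intro θ _ h2
      exact S_subset_C ⟨fun k j => θ ⟨k, j⟩, fun k j => h2 ⟨k, j⟩ (by simp),
        fun x => by simp⟩
  | @insert i s hi ih =>
      intro θ h1 h2
      obtain ⟨k₀, j₀⟩ := i
      set a := θ ⟨k₀, j₀⟩ with ha
      obtain ⟨hal, har⟩ := h1 ⟨k₀, j₀⟩
      set θm := Function.update θ ⟨k₀, j₀⟩ (-1:ℝ) with hθm
      set θp := Function.update θ ⟨k₀, j₀⟩ (1:ℝ) with hθp
      have hmem : ∀ (c : ℝ), c = -1 ∨ c = 1 →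
          (fun y => ∏ k, (Function.update θ ⟨k₀, j₀⟩ c) ⟨k, y k⟩) ∈ setC p r 1 := by
        intro c hc
        apply ih
        · intro i'
          by_cases h : i' = ⟨k₀, j₀⟩
          · subst h; rw [Function.update_self]
            rcases hc with h | h <;> simp [h]
          · rw [Function.update_of_ne h]; exact h1 i'
        · intro i' hi'
          by_cases h : i' = ⟨k₀, j₀⟩
          · subst h; rw [Function.update_self]; exact hc
          · rw [Function.update_of_ne h]
            exact h2 i' (by simp [h, hi'])
      have hm := hmem (-1) (Or.inl rfl)
      have hpp := hmem 1 (Or.inr rfl)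
      have key : (fun y => ∏ k, θ ⟨k, y k⟩)
          = ((1-a)/2) • (fun y : (i : Fin p) → Fin (r i) => ∏ k, θm ⟨k, y k⟩)
            + ((1+a)/2) • (fun y : (i : Fin p) → Fin (r i) => ∏ k, θp ⟨k, y k⟩) := by
        funext y
        have hne : ∀ k : Fin p, k ≠ k₀ →
            ((⟨k, y k⟩ : (k : Fin p) × Fin (r k)) ≠ ⟨k₀, j₀⟩) := by
          intro k hk h
          exact hk (congrArg Sigma.fst h)
        by_cases hy : y k₀ = j₀
        · have hik : (⟨k₀, y k₀⟩ : (k : Fin p) × Fin (r k)) = ⟨k₀, j₀⟩ := by rw [hy]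
          have split : ∀ g : ((k : Fin p) × Fin (r k)) → ℝ,
              ∏ k, g ⟨k, y k⟩ = g ⟨k₀, j₀⟩ * ∏ k ∈ Finset.univ.erase k₀, g ⟨k, y k⟩ := by
            intro g
            rw [← Finset.mul_prod_erase Finset.univ (fun k => g ⟨k, y k⟩) (Finset.mem_univ k₀), hik]
          have heq : ∀ (c : ℝ), ∏ k ∈ Finset.univ.erase k₀,
              (Function.update θ ⟨k₀, j₀⟩ c) ⟨k, y k⟩
              = ∏ k ∈ Finset.univ.erase k₀, θ ⟨k, y k⟩ := by
            intro c
            refine Finset.prod_congr rfl fun k hk => ?_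
            exact Function.update_of_ne (hne k (Finset.ne_of_mem_erase hk)) _ _
          simp only [Pi.add_apply, Pi.smul_apply, smul_eq_mul]
          rw [split θ, split θm, split θp, hθm, hθp, heq, heq,
            Function.update_self, Function.update_self, ← ha]
          ring
        · have heq : ∀ (c : ℝ), (fun k : Fin p => (Function.update θ ⟨k₀, j₀⟩ c) ⟨k, y k⟩)
              = fun k => θ ⟨k, y k⟩ := by
            intro c
            funext k
            by_cases hk : k = k₀
            · subst hk
              refine Function.update_of_ne (fun h => ?_) _ _
              apply hy
              have := (Sigma.mk.inj_iff.mp h).2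
              exact eq_of_heq this
            · exact Function.update_of_ne (hne k hk) _ _
          simp only [Pi.add_apply, Pi.smul_apply, smul_eq_mul, hθm, hθp, heq]
          ring
      rw [key]
      exact convex_C hm hpp (by linarith) (by linarith) (by ring)

lemma single_mem_C (hp : 1 ≤ p) (x : (i : Fin p) → Fin (r i)) :
    Pi.single x (1:ℝ) ∈ setC p r 1 := by
  have := prod_mem_C hp Finset.univ
    (fun i => if i.2 = x i.1 then (1:ℝ) else 0)
    (fun i => by by_cases h : i.2 = x i.1 <;> simp [h])
    (fun i hi => absurd (Finset.mem_univ i) hi)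
  convert this using 1
  funext y
  simp only [Finset.prod_boole]
  rw [Pi.single_apply]
  by_cases h : y = x
  · subst h; simp
  · have : ¬ ∀ k, y k = x k := fun hk => h (funext hk)
    simp [h, this]


variable (p) (r) in
def Aset (ψ : ((i : Fin p) → Fin (r i)) → ℝ) : Set ℝ :=
  {lam : ℝ | 0 ≤ lam ∧ ψ ∈ lam • setC p r 1}

lemma bddBelow_A (ψ : ((i : Fin p) → Fin (r i)) → ℝ) : BddBelow (Aset p r ψ) :=
  ⟨0, fun _ h => h.1⟩

lemma zero_mem_A_zero : (0:ℝ) ∈ Aset p r 0 := by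
  refine ⟨le_refl 0, ?_⟩
  rw [Set.zero_smul_set ⟨_, S_subset_C (one_mem_S (p := p) (r := r))⟩]
  exact Set.zero_mem_zero

lemma sum_abs_le_one_mem_C (hp : 1 ≤ p) (φ : Idx p r → ℝ)
    (h : ∑ x, |φ x| ≤ 1) : φ ∈ setC p r 1 := by
  classical
  set w : Option (Idx p r) → ℝ := fun o => o.elim (1 - ∑ x, |φ x|) (fun x => |φ x|) with hw
  set z : Option (Idx p r) → (Idx p r → ℝ) := fun o =>
    o.elim 0 (fun x => if 0 ≤ φ x then Pi.single x 1 else -(Pi.single x 1)) with hz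
  have hmem : ∀ o ∈ Finset.univ, z o ∈ setC p r 1 := by
    rintro (_ | x) _
    · exact zero_mem_C hp
    · by_cases hx : 0 ≤ φ x
      · simpa [hz, hx] using single_mem_C hp x
      · simpa [hz, hx] using neg_mem_C hp (single_mem_C hp x)
  have h0 : ∀ o ∈ Finset.univ, 0 ≤ w o := by
    rintro (_ | x) _
    · simpa [hw] using h
    · exact abs_nonneg _
  have h1 : ∑ o : Option (Idx p r), w o = 1 := by
    rw [Fintype.sum_option]; simp [hw]
  have := convex_C.sum_mem h0 h1 hmem
  have heq : ∑ o : Option (Idx p r), w o • z o = φ := by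
    rw [Fintype.sum_option]
    simp only [hw, hz, Option.elim, smul_zero, zero_add]
    funext y
    rw [Finset.sum_apply]
    have hterm : ∀ x : Idx p r,
        (|φ x| • (if 0 ≤ φ x then (Pi.single x 1 : Idx p r → ℝ) else -(Pi.single x 1))) y
          = if y = x then φ x else 0 := by
      intro x
      by_cases hx : 0 ≤ φ x
      · simp only [hx, if_true, Pi.smul_apply, smul_eq_mul, Pi.single_apply]
        rw [abs_of_nonneg hx]
        by_cases hyx : y = x <;> simp [hyx]
      · simp only [hx, if_false, Pi.smul_apply, Pi.neg_apply, smul_eq_mul, Pi.single_apply]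
        rw [abs_of_neg (lt_of_not_ge hx)]
        by_cases hyx : y = x <;> simp [hyx]
    calc ∑ x : Idx p r, (|φ x| • (if 0 ≤ φ x then (Pi.single x 1 : Idx p r → ℝ) else -(Pi.single x 1))) y
        = ∑ x : Idx p r, if y = x then φ x else 0 := Finset.sum_congr rfl (fun x _ => hterm x)
      _ = φ y := by rw [Finset.sum_ite_eq Finset.univ y φ]; simp
  rwa [heq] at this

lemma total_mem_A (hp : 1 ≤ p) (ψ : ((i : Fin p) → Fin (r i)) → ℝ) :
    (∑ x, |ψ x|) ∈ Aset p r ψ := by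
  set T := ∑ x, |ψ x| with hT
  have hT0 : 0 ≤ T := Finset.sum_nonneg fun x _ => abs_nonneg _
  rcases eq_or_lt_of_le hT0 with h | h
  · have hψ : ψ = 0 := by
      funext x
      have := (Finset.sum_eq_zero_iff_of_nonneg (fun x _ => abs_nonneg (ψ x))).mp h.symm
      simpa using this x (Finset.mem_univ x)
    rw [hψ, ← h]
    exact zero_mem_A_zero
  · refine ⟨hT0, ?_⟩
    have hmem : T⁻¹ • ψ ∈ setC p r 1 := by
      apply sum_abs_le_one_mem_C hp
      have : ∀ x, |(T⁻¹ • ψ) x| = T⁻¹ * |ψ x| := by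
        intro x
        simp [abs_mul, abs_of_pos (inv_pos.mpr h)]
      rw [Finset.sum_congr rfl fun x _ => this x, ← Finset.mul_sum, ← hT,
        inv_mul_cancel₀ (ne_of_gt h)]
    have := Set.smul_mem_smul_set (a := T) hmem
    rwa [smul_inv_smul₀ (ne_of_gt h)] at this

lemma abs_le_of_mem_A {ψ : ((i : Fin p) → Fin (r i)) → ℝ} {lam : ℝ}
    (h : lam ∈ Aset p r ψ) (x : (i : Fin p) → Fin (r i)) : |ψ x| ≤ lam := by
  obtain ⟨hlam, c, hc, hcψ⟩ := h
  have : ψ x = lam * c x := by rw [← hcψ]; rfl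
  rw [this, abs_mul, abs_of_nonneg hlam]
  calc lam * |c x| ≤ lam * 1 := by gcongr; exact abs_le_one_of_mem_C hc x
    _ = lam := mul_one lam

lemma gaugeNorm_zero (hp : 1 ≤ p) : gaugeNorm (0 : ((i : Fin p) → Fin (r i)) → ℝ) = 0 := by
  refine le_antisymm (csInf_le (bddBelow_A 0) zero_mem_A_zero) ?_
  exact le_csInf ⟨0, zero_mem_A_zero⟩ fun b hb => hb.1

lemma smul_mem_A (hp : 1 ≤ p) {ψ : ((i : Fin p) → Fin (r i)) → ℝ} {lam : ℝ} (a : ℝ)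
    (h : lam ∈ Aset p r ψ) : |a| * lam ∈ Aset p r (a • ψ) := by
  obtain ⟨hlam, c, hc, hcψ⟩ := h
  refine ⟨mul_nonneg (abs_nonneg a) hlam, ?_⟩
  rcases lt_trichotomy a 0 with ha | ha | ha
  · refine ⟨-c, neg_mem_C hp hc, ?_⟩
    rw [← hcψ, abs_of_neg ha]
    funext y; simp; ring
  · subst ha
    rw [abs_zero, zero_mul, zero_smul,
      Set.zero_smul_set ⟨_, S_subset_C (one_mem_S (p := p) (r := r))⟩]
    exact Set.zero_mem_zero
  · refine ⟨c, hc, ?_⟩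
    rw [← hcψ, abs_of_pos ha]
    funext y; simp; ring

lemma gaugeNorm_eq (ψ : ((i : Fin p) → Fin (r i)) → ℝ) :
    gaugeNorm ψ = sInf (Aset p r ψ) := rfl

lemma A_nonempty (hp : 1 ≤ p) (ψ : ((i : Fin p) → Fin (r i)) → ℝ) :
    (Aset p r ψ).Nonempty := ⟨_, total_mem_A hp ψ⟩

lemma gauge_smul_le (hp : 1 ≤ p) {a : ℝ} (ha : a ≠ 0)
    (ψ : ((i : Fin p) → Fin (r i)) → ℝ) :
    gaugeNorm (a • ψ) ≤ |a| * gaugeNorm ψ := by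
  have hap : 0 < |a| := abs_pos.mpr ha
  have h1 : ∀ lam ∈ Aset p r ψ, gaugeNorm (a • ψ) ≤ |a| * lam := fun lam hl => by
    rw [gaugeNorm_eq]
    exact csInf_le (bddBelow_A _) (smul_mem_A hp a hl)
  have h2 : gaugeNorm (a • ψ) / |a| ≤ gaugeNorm ψ := by
    rw [gaugeNorm_eq ψ]
    refine le_csInf (A_nonempty hp ψ) fun lam hl => ?_
    rw [div_le_iff₀ hap, mul_comm]
    exact h1 lam hl
  calc gaugeNorm (a • ψ) = (gaugeNorm (a • ψ) / |a|) * |a| := by field_simp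
    _ ≤ gaugeNorm ψ * |a| := by gcongr
    _ = |a| * gaugeNorm ψ := mul_comm _ _

lemma gauge_triangle (hp : 1 ≤ p) (ψ φ : ((i : Fin p) → Fin (r i)) → ℝ) :
    gaugeNorm (ψ + φ) ≤ gaugeNorm ψ + gaugeNorm φ := by
  have hadd : ∀ lam ∈ Aset p r ψ, ∀ μ ∈ Aset p r φ, lam + μ ∈ Aset p r (ψ + φ) := by
    rintro lam ⟨hl, c, hc, hcψ⟩ μ ⟨hm, d, hd, hdφ⟩
    refine ⟨by linarith, ?_⟩
    rcases eq_or_lt_of_le (add_nonneg hl hm) with h | h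
    · have hl0 : lam = 0 := by linarith
      have hm0 : μ = 0 := by linarith
      have hz : ψ + φ = 0 := by
        rw [← hcψ, ← hdφ, hl0, hm0]; simp
      rw [hz, ← h,
        Set.zero_smul_set ⟨_, S_subset_C (one_mem_S (p := p) (r := r))⟩]
      exact Set.zero_mem_zero
    · have hne0 : lam + μ ≠ 0 := ne_of_gt h
      refine Set.mem_smul_set.mpr ⟨(lam/(lam+μ)) • c + (μ/(lam+μ)) • d, ?_, ?_⟩
      · exact convex_C hc hd (div_nonneg hl h.le) (div_nonneg hm h.le)
          (by field_simp)
      · rw [← hcψ, ← hdφ]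
        funext y
        show (lam+μ) * (lam/(lam+μ) * c y + μ/(lam+μ) * d y) = lam * c y + μ * d y
        field_simp
  have key : ∀ lam ∈ Aset p r ψ, ∀ μ ∈ Aset p r φ, gaugeNorm (ψ+φ) ≤ lam + μ :=
    fun lam hl μ hm => by
      rw [gaugeNorm_eq]
      exact csInf_le (bddBelow_A _) (hadd lam hl μ hm)
  have h2 : ∀ lam ∈ Aset p r ψ, gaugeNorm (ψ+φ) - lam ≤ gaugeNorm φ := fun lam hl => by
    rw [gaugeNorm_eq φ]
    exact le_csInf (A_nonempty hp φ) fun μ hm => by linarith [key lam hl μ hm]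
  have h3 : gaugeNorm (ψ+φ) - gaugeNorm φ ≤ gaugeNorm ψ := by
    rw [gaugeNorm_eq ψ]
    exact le_csInf (A_nonempty hp ψ) fun lam hl => by linarith [h2 lam hl]
  linarith

end GaugeAux

open GaugeAux

/-- the gauge function `‖ψ‖_± = inf {λ ≥ 0 : ψ ∈ λ • C_1}` is a norm:
the infimum is over a nonempty set, it vanishes exactly at `0`, it is absolutely
homogeneous, and it satisfies the triangle inequality. -/
theorem gaugeNorm_is_norm (p : ℕ) (hp : 1 ≤ p) (r : Fin p → ℕ) (hr : ∀ i, 1 ≤ r i) :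
    (∀ ψ : ((i : Fin p) → Fin (r i)) → ℝ,
        {lam : ℝ | 0 ≤ lam ∧ ψ ∈ lam • setC p r 1}.Nonempty) ∧
      (∀ ψ : ((i : Fin p) → Fin (r i)) → ℝ, gaugeNorm ψ = 0 ↔ ψ = 0) ∧
      (∀ (a : ℝ) (ψ : ((i : Fin p) → Fin (r i)) → ℝ),
        gaugeNorm (a • ψ) = |a| * gaugeNorm ψ) ∧
      (∀ ψ φ : ((i : Fin p) → Fin (r i)) → ℝ,
        gaugeNorm (ψ + φ) ≤ gaugeNorm ψ + gaugeNorm φ) := by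
  refine ⟨fun ψ => A_nonempty hp ψ, fun ψ => ⟨fun h => ?_, fun h => ?_⟩, fun a ψ => ?_, 
    fun ψ φ => gauge_triangle hp ψ φ⟩
  · funext x
    have hlb : |ψ x| ≤ gaugeNorm ψ := by
      rw [gaugeNorm_eq ψ]
      exact le_csInf (A_nonempty hp ψ) fun lam hl => abs_le_of_mem_A hl x
    rw [h] at hlb
    simpa using abs_nonpos_iff.mp hlb
  · rw [h]; exact gaugeNorm_zero hp
  · by_cases ha : a = 0
    · subst ha; simp [gaugeNorm_zero hp]
    · have h2 := gauge_smul_le hp (inv_ne_zero ha) (a • ψ)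
      rw [inv_smul_smul₀ ha, abs_inv] at h2
      have h3 := mul_le_mul_of_nonneg_left h2 (abs_nonneg a)
      rw [← mul_assoc, mul_inv_cancel₀ (abs_ne_zero.mpr ha), one_mul] at h3
      exact le_antisymm (gauge_smul_le hp ha ψ) h3
end
end

section
/- For every rank-1 tensor ψ, i.e., a tensor of the form ψ_x = ∏_{k=1}^p θ^{(k)}_{x_k} for some real vectors θ^{(k)} ∈ ℝ^{r_k}, the gauge norm equals the max norm: ‖ψ‖_± = ‖ψ‖_max. -/
open Set Pointwise

noncomputable section

open Classical in
/-- Key lemma: a rank-1 tensor with factor entries in `[-1,1]` lies in `conv(S₁)`. -/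
lemma box_mem_setC (p : ℕ) (r : Fin p → ℕ) :
    ∀ (n : ℕ) (θ : (k : Fin p) → Fin (r k) → ℝ),
    (Finset.univ.filter
        (fun e : Σ k : Fin p, Fin (r k) => θ e.1 e.2 ≠ -1 ∧ θ e.1 e.2 ≠ 1)).card ≤ n →
    (∀ k j, -1 ≤ θ k j ∧ θ k j ≤ 1) →
    (fun x => ∏ k, θ k (x k)) ∈ setC p r 1 := by
  intro n
  induction n with
  | zero =>
    intro θ hcard hθ
    apply subset_convexHull
    refine ⟨θ, ?_, fun x => by simp⟩
    intro k j
    have : (⟨k, j⟩ : Σ k : Fin p, Fin (r k)) ∉ Finset.univ.filter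
        (fun e : Σ k : Fin p, Fin (r k) => θ e.1 e.2 ≠ -1 ∧ θ e.1 e.2 ≠ 1) := by
      have h0 := Nat.le_zero.mp hcard
      simp [Finset.card_eq_zero.mp h0]
    simp only [Finset.mem_filter, Finset.mem_univ, true_and, not_and_or, not_not] at this
    tauto
  | succ n ih =>
    intro θ hcard hθ
    set bad := Finset.univ.filter
        (fun e : Σ k : Fin p, Fin (r k) => θ e.1 e.2 ≠ -1 ∧ θ e.1 e.2 ≠ 1) with hbad
    by_cases hle : bad.card ≤ n
    · exact ih θ hle hθ
    · have hne : bad.Nonempty := by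
        rw [← Finset.card_pos]; omega
      obtain ⟨e, he⟩ := hne
      obtain ⟨k₀, j₀⟩ := e
      simp only [hbad, Finset.mem_filter, Finset.mem_univ, true_and] at he
      set t := θ k₀ j₀ with ht
      have htb := hθ k₀ j₀
      set a : ℝ := (1 + t) / 2 with ha
      set b : ℝ := (1 - t) / 2 with hb
      have ha0 : 0 ≤ a := by rw [ha]; linarith [htb.1]
      have hb0 : 0 ≤ b := by rw [hb]; linarith [htb.2]
      have hab : a + b = 1 := by rw [ha, hb]; ring
      -- updated tensors
      set θp := Function.update θ k₀ (Function.update (θ k₀) j₀ 1) with hθp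
      set θm := Function.update θ k₀ (Function.update (θ k₀) j₀ (-1)) with hθm
      have hupd : ∀ (v : ℝ) (k : Fin p) (j : Fin (r k)),
          Function.update θ k₀ (Function.update (θ k₀) j₀ v) k j
            = if h : k = k₀ then (if (h ▸ j) = j₀ then v else θ k₀ (h ▸ j)) else θ k j := by
        intro v k j
        by_cases h : k = k₀
        · subst h
          simp [Function.update_self, Function.update_apply]
        · rw [dif_neg h, Function.update_of_ne h]
      have hboundsp : ∀ k j, -1 ≤ θp k j ∧ θp k j ≤ 1 := by
        intro k j
        rw [hθp, hupd]
        split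
        · split
          · norm_num
          · exact hθ _ _
        · exact hθ _ _
      have hboundsm : ∀ k j, -1 ≤ θm k j ∧ θm k j ≤ 1 := by
        intro k j
        rw [hθm, hupd]
        split
        · split
          · norm_num
          · exact hθ _ _
        · exact hθ _ _
      -- card decrease
      have hcardp : (Finset.univ.filter
          (fun e : Σ k : Fin p, Fin (r k) => θp e.1 e.2 ≠ -1 ∧ θp e.1 e.2 ≠ 1)).card ≤ n := by
        have hsub : (Finset.univ.filter
            (fun e : Σ k : Fin p, Fin (r k) => θp e.1 e.2 ≠ -1 ∧ θp e.1 e.2 ≠ 1)) ⊂ bad := by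
          constructor
          · intro e' he'
            simp only [Finset.mem_filter, Finset.mem_univ, true_and] at he' ⊢
            rw [hbad]
            simp only [Finset.mem_filter, Finset.mem_univ, true_and]
            obtain ⟨k', j'⟩ := e'
            rw [hθp, hupd] at he'
            by_cases h : k' = k₀
            · subst h
              simp only [dif_pos rfl] at he'
              by_cases h2 : j' = j₀
              · rw [if_pos h2] at he'; exact absurd rfl he'.2
              · rw [if_neg h2] at he'; exact he'
            · rw [dif_neg h] at he'; exact he'
          · intro hsup
            have : (⟨k₀, j₀⟩ : Σ k : Fin p, Fin (r k)) ∈ bad := by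
              rw [hbad]; simp only [Finset.mem_filter, Finset.mem_univ, true_and]; exact he
            have h2 := hsup this
            simp only [Finset.mem_filter, Finset.mem_univ, true_and] at h2
            rw [hθp, hupd] at h2
            simp at h2
        have := Finset.card_lt_card hsub
        omega
      have hcardm : (Finset.univ.filter
          (fun e : Σ k : Fin p, Fin (r k) => θm e.1 e.2 ≠ -1 ∧ θm e.1 e.2 ≠ 1)).card ≤ n := by
        have hsub : (Finset.univ.filter
            (fun e : Σ k : Fin p, Fin (r k) => θm e.1 e.2 ≠ -1 ∧ θm e.1 e.2 ≠ 1)) ⊂ bad := by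
          constructor
          · intro e' he'
            simp only [Finset.mem_filter, Finset.mem_univ, true_and] at he' ⊢
            rw [hbad]
            simp only [Finset.mem_filter, Finset.mem_univ, true_and]
            obtain ⟨k', j'⟩ := e'
            rw [hθm, hupd] at he'
            by_cases h : k' = k₀
            · subst h
              simp only [dif_pos rfl] at he'
              by_cases h2 : j' = j₀
              · rw [if_pos h2] at he'; exact absurd rfl he'.1
              · rw [if_neg h2] at he'; exact he'
            · rw [dif_neg h] at he'; exact he'
          · intro hsup
            have : (⟨k₀, j₀⟩ : Σ k : Fin p, Fin (r k)) ∈ bad := by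
              rw [hbad]; simp only [Finset.mem_filter, Finset.mem_univ, true_and]; exact he
            have h2 := hsup this
            simp only [Finset.mem_filter, Finset.mem_univ, true_and] at h2
            rw [hθm, hupd] at h2
            simp at h2
        have := Finset.card_lt_card hsub
        omega
      have hmp := ih θp hcardp hboundsp
      have hmm := ih θm hcardm hboundsm
      -- product decomposition
      have hprod : ∀ (v : ℝ) (x : (i : Fin p) → Fin (r i)),
          (∏ k, Function.update θ k₀ (Function.update (θ k₀) j₀ v) k (x k))
            = (if x k₀ = j₀ then v else θ k₀ (x k₀))
                * ∏ k ∈ Finset.univ.erase k₀, θ k (x k) := by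
        intro v x
        rw [← Finset.mul_prod_erase Finset.univ _ (Finset.mem_univ k₀)]
        congr 1
        · rw [hupd]; simp
        · apply Finset.prod_congr rfl
          intro k hk
          rw [hupd, dif_neg (Finset.mem_erase.mp hk).1]
      have hkey : (fun x : (i : Fin p) → Fin (r i) => ∏ k, θ k (x k))
          = a • (fun x : (i : Fin p) → Fin (r i) => ∏ k, θp k (x k))
            + b • (fun x : (i : Fin p) → Fin (r i) => ∏ k, θm k (x k)) := by
        funext x
        simp only [Pi.add_apply, Pi.smul_apply, smul_eq_mul]
        rw [hθp, hθm, hprod 1 x, hprod (-1) x]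
        have hθx : (∏ k, θ k (x k))
            = θ k₀ (x k₀) * ∏ k ∈ Finset.univ.erase k₀, θ k (x k) :=
          (Finset.mul_prod_erase Finset.univ _ (Finset.mem_univ k₀)).symm
        rw [hθx]
        by_cases h : x k₀ = j₀
        · rw [if_pos h, if_pos h, h, ← ht, ha, hb]; ring
        · rw [if_neg h, if_neg h, ← add_mul, hab, one_mul]
      rw [hkey]
      exact (convex_convexHull ℝ (setS p r 1)) hmp hmm ha0 hb0 hab

lemma abs_le_one_of_mem_setC (p : ℕ) (r : Fin p → ℕ)
    (φ : ((i : Fin p) → Fin (r i)) → ℝ) (hφ : φ ∈ setC p r 1) :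
    ∀ x, |φ x| ≤ 1 := by
  have hsub : setC p r 1 ⊆ {φ : ((i : Fin p) → Fin (r i)) → ℝ | ∀ x, |φ x| ≤ 1} := by
    apply convexHull_min
    · rintro φ' ⟨θ, hθ, hφ'⟩ x
      rw [hφ' x, one_mul, Finset.abs_prod]
      have : ∀ k ∈ Finset.univ, |θ k (x k)| = 1 := by
        intro k _
        rcases hθ k (x k) with h | h <;> rw [h] <;> norm_num
      rw [Finset.prod_congr rfl this]
      simp
    · intro φ₁ h₁ φ₂ h₂ a b ha hb hab
      simp only [Set.mem_setOf_eq] at h₁ h₂ ⊢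
      intro x
      simp only [Pi.add_apply, Pi.smul_apply, smul_eq_mul]
      calc |a * φ₁ x + b * φ₂ x| ≤ |a * φ₁ x| + |b * φ₂ x| := abs_add_le _ _
        _ = a * |φ₁ x| + b * |φ₂ x| := by
            rw [abs_mul, abs_mul, abs_of_nonneg ha, abs_of_nonneg hb]
        _ ≤ a * 1 + b * 1 := by
            gcongr
            · exact h₁ x
            · exact h₂ x
        _ = 1 := by rw [mul_one, mul_one, hab]
  exact hsub hφ

/-- for rank-1 tensors, the gauge norm equals the max norm. -/
theorem gaugeNorm_eq_maxNorm_of_rank_one (p : ℕ) (hp : 1 ≤ p) (r : Fin p → ℕ)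
    (hr : ∀ i, 1 ≤ r i) (ψ : ((i : Fin p) → Fin (r i)) → ℝ)
    (θ : (k : Fin p) → Fin (r k) → ℝ) (hψ : ∀ x, ψ x = ∏ k, θ k (x k)) :
    gaugeNorm ψ = maxNorm ψ := by
  haveI : ∀ i, Nonempty (Fin (r i)) := fun i => ⟨⟨0, hr i⟩⟩
  haveI hne : Nonempty ((i : Fin p) → Fin (r i)) := ⟨fun i => ⟨0, hr i⟩⟩
  -- per-factor maximizers
  have hmax : ∀ k : Fin p, ∃ j : Fin (r k), ∀ j', |θ k j'| ≤ |θ k j| := fun k =>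
    Finite.exists_max fun j => |θ k j|
  choose jstar hjstar using hmax
  set m : Fin p → ℝ := fun k => |θ k (jstar k)| with hm
  set M : ℝ := ∏ k, m k with hM
  have hm0 : ∀ k, 0 ≤ m k := fun k => abs_nonneg _
  have hM0 : 0 ≤ M := Finset.prod_nonneg fun k _ => hm0 k
  have hbound : ∀ x, |ψ x| ≤ M := by
    intro x
    rw [hψ x, Finset.abs_prod, hM]
    exact Finset.prod_le_prod (fun k _ => abs_nonneg _) fun k _ => hjstar k (x k)
  have hattain : |ψ jstar| = M := by
    rw [hψ jstar, Finset.abs_prod]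
  have hmaxNorm : maxNorm ψ = M := by
    unfold maxNorm
    apply le_antisymm
    · exact ciSup_le hbound
    · rw [← hattain]
      exact le_ciSup (f := fun x => |ψ x|) (Finite.bddAbove_range _) jstar
  -- membership of M in the gauge set
  have hmem : ψ ∈ M • setC p r 1 := by
    by_cases hMz : M = 0
    · have hψ0 : ψ = 0 := by
        funext x
        have := hbound x
        rw [hMz] at this
        have := abs_nonneg (ψ x)
        have : |ψ x| = 0 := le_antisymm (hMz ▸ hbound x) (abs_nonneg _)
        exact abs_eq_zero.mp this
      refine ⟨fun _ => (1 : ℝ), ?_, ?_⟩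
      · apply subset_convexHull
        exact ⟨fun k j => 1, fun k j => Or.inr rfl, fun x => by simp⟩
      · funext x
        rw [hψ0, hMz]
        simp
    · have hMpos : 0 < M := lt_of_le_of_ne hM0 (Ne.symm hMz)
      have hmne : ∀ k, m k ≠ 0 := by
        intro k
        rw [hM] at hMz
        exact fun h => hMz (Finset.prod_eq_zero (Finset.mem_univ k) h)
      have hmpos : ∀ k, 0 < m k := fun k => lt_of_le_of_ne (hm0 k) (Ne.symm (hmne k))
      set θ' : (k : Fin p) → Fin (r k) → ℝ := fun k j => θ k j / m k with hθ'
      have hbounds : ∀ k j, -1 ≤ θ' k j ∧ θ' k j ≤ 1 := by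
        intro k j
        have h1 : |θ' k j| ≤ 1 := by
          rw [hθ', abs_div, abs_of_nonneg (hm0 k)]
          exact div_le_one_of_le₀ (hjstar k j) (hm0 k)
        exact abs_le.mp h1
      refine ⟨fun x => ∏ k, θ' k (x k), box_mem_setC p r _ θ' le_rfl hbounds, ?_⟩
      funext x
      simp only [Pi.smul_apply, smul_eq_mul]
      rw [hψ x, hM, ← Finset.prod_mul_distrib]
      apply Finset.prod_congr rfl
      intro k _
      rw [hθ', mul_comm, div_mul_cancel₀ _ (hmne k)]
  -- conclusion
  have hub : ∀ lam ∈ {lam : ℝ | 0 ≤ lam ∧ ψ ∈ lam • setC p r 1}, maxNorm ψ ≤ lam := by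
    rintro lam ⟨hlam0, φ, hφC, hφψ⟩
    refine ciSup_le fun x => ?_
    have : ψ x = lam * φ x := by rw [← hφψ]; simp
    rw [this, abs_mul, abs_of_nonneg hlam0]
    calc lam * |φ x| ≤ lam * 1 := by
          exact mul_le_mul_of_nonneg_left (abs_le_one_of_mem_setC p r φ hφC x) hlam0
      _ = lam := mul_one lam
  have hmemset : maxNorm ψ ∈ {lam : ℝ | 0 ≤ lam ∧ ψ ∈ lam • setC p r 1} := by
    rw [hmaxNorm]
    exact ⟨hM0, hmem⟩
  apply le_antisymm
  · exact csInf_le ⟨maxNorm ψ, hub⟩ hmemset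
  · exact le_csInf ⟨maxNorm ψ, hmemset⟩ hub
end
end

section
/- If a tensor ψ can be written as a finite sum ψ = Σ_{k=1}^q ψ^k of rank-1 tensors ψ^k (each of the form (ψ^k)_x = ∏_{j=1}^p θ^{(k,j)}_{x_j} for real vectors θ^{(k,j)} ∈ ℝ^{r_j}), then ‖ψ‖_± ≤ Σ_{k=1}^q ‖ψ^k‖_max. -/
open Set Pointwise

noncomputable section

/-!
A rank-one tensor `⊗ⱼ θ⁽ʲ⁾` is `∏ⱼ maxᵢ |θ⁽ʲ⁾ᵢ|` times a rank-one tensor whose factors lie in the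
cubes `[-1,1]^{r_j}`, and that scale is exactly its max norm. Each cube is the convex hull of
`{-1,1}^{r_j}` and the outer product is multilinear, so rank-one tensors with factors in the cubes
lie in `C_1`. Finally `a • C_1 + b • C_1 = (a + b) • C_1` for `a, b ≥ 0` by convexity, so
`ψ ∈ (∑ₖ ‖ψᵏ‖_max) • C_1`.
-/

theorem Convex.sum_mem_sum_smul {𝕜 E : Type*} [Field 𝕜] [LinearOrder 𝕜] [IsStrictOrderedRing 𝕜]
    [AddCommGroup E] [Module 𝕜 E] {s : Set E} (hs : Convex 𝕜 s) (hne : s.Nonempty)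
    {ι : Type*} (t : Finset ι) {v : ι → E} {m : ι → 𝕜} (hm : ∀ i ∈ t, 0 ≤ m i)
    (hv : ∀ i ∈ t, v i ∈ m i • s) : ∑ i ∈ t, v i ∈ (∑ i ∈ t, m i) • s := by
  classical
  induction t using Finset.induction_on with
  | empty => simp [zero_smul_set hne]
  | insert i t hi ih =>
    simp only [Finset.mem_insert, forall_eq_or_imp] at hm hv
    rw [Finset.sum_insert hi, Finset.sum_insert hi,
      hs.add_smul hm.1 (Finset.sum_nonneg hm.2)]
    exact add_mem_add hv.1 (ih hm.2 hv.2)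

/-- `f` is linear in each coordinate separately, so the coordinates can be convexified one at a
time. -/
theorem MultilinearMap.map_mem_convexHull_image_pi {𝕜 ι F : Type*} {E : ι → Type*}
    [CommSemiring 𝕜] [PartialOrder 𝕜] [Fintype ι]
    [∀ i, AddCommMonoid (E i)] [∀ i, Module 𝕜 (E i)] [AddCommMonoid F] [Module 𝕜 F]
    (f : MultilinearMap 𝕜 E F) {s : ∀ i, Set (E i)} {v : ∀ i, E i}
    (hv : ∀ i, v i ∈ convexHull 𝕜 (s i)) : f v ∈ convexHull 𝕜 (f '' univ.pi s) := by
  classical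
  suffices key : ∀ t : Finset ι, ∀ w : ∀ i, E i, (∀ i ∈ t, w i ∈ convexHull 𝕜 (s i)) →
      (∀ i ∉ t, w i ∈ s i) → f w ∈ convexHull 𝕜 (f '' univ.pi s) from
    key Finset.univ v (fun i _ => hv i) (by simp)
  intro t
  induction t using Finset.induction_on with
  | empty => exact fun w _ hw => subset_convexHull 𝕜 _ ⟨w, fun i _ => hw i (by simp), rfl⟩
  | insert i t hi ih =>
    intro w hwt hw
    have hconv : Convex 𝕜 {y | f (Function.update w i y) ∈ convexHull 𝕜 (f '' univ.pi s)} :=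
      (convex_convexHull 𝕜 _).linear_preimage (f.toLinearMap w i)
    have hsi : s i ⊆ {y | f (Function.update w i y) ∈ convexHull 𝕜 (f '' univ.pi s)} := by
      intro y hy
      refine ih _ (fun j hj => ?_) (fun j hj => ?_)
      · rw [Function.update_of_ne (ne_of_mem_of_not_mem hj hi)]
        exact hwt j (Finset.mem_insert_of_mem hj)
      · rcases eq_or_ne j i with rfl | hji
        · simpa using hy
        · rw [Function.update_of_ne hji]
          exact hw j (by simp [hji, hj])
    simpa using convexHull_min hsi hconv (hwt i (Finset.mem_insert_self i t))

def outerProd (R : Type*) [CommSemiring R] {ι : Type*} [Fintype ι] (κ : ι → Type*) :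
    MultilinearMap R (fun i => κ i → R) ((∀ i, κ i) → R) :=
  MultilinearMap.pi fun x =>
    (MultilinearMap.mkPiAlgebra R ι R).compLinearMap fun i => LinearMap.proj (x i)

@[simp]
theorem outerProd_apply {R : Type*} [CommSemiring R] {ι : Type*} [Fintype ι] {κ : ι → Type*}
    (θ : ∀ i, κ i → R) (x : ∀ i, κ i) : outerProd R κ θ x = ∏ i, θ i (x i) := by
  simp [outerProd]

theorem setB_subset_setC (p : ℕ) (r : Fin p → ℕ) (lam : ℝ) : setB p r lam ⊆ setC p r lam := by
  rintro ψ ⟨θ, hθ, hψ⟩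
  have hcube : ∀ k, θ k ∈ convexHull ℝ (univ.pi fun _ => ({-1, 1} : Set ℝ)) := by
    intro k
    rw [convexHull_pi, convexHull_pair, segment_eq_Icc (by norm_num)]
    exact fun j _ => hθ k j
  have hψ' : ψ = (lam • outerProd ℝ (fun k => Fin (r k))) θ := funext fun x => by simp [hψ]
  rw [hψ']
  refine convexHull_mono ?_ (MultilinearMap.map_mem_convexHull_image_pi _ hcube)
  rintro _ ⟨θ', hθ', rfl⟩
  exact ⟨θ', fun k j => by simpa [or_comm] using hθ' k (mem_univ k) j (mem_univ j),
    fun x => by simp⟩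

theorem maxNorm_eq_abs_of_forall_abs_le {p : ℕ} {r : Fin p → ℕ}
    (ψ : ((i : Fin p) → Fin (r i)) → ℝ) (x₀ : (i : Fin p) → Fin (r i))
    (h : ∀ x, |ψ x| ≤ |ψ x₀|) : maxNorm ψ = |ψ x₀| :=
  have : Nonempty ((i : Fin p) → Fin (r i)) := ⟨x₀⟩
  le_antisymm (ciSup_le h) (le_ciSup (Finite.bddAbove_range fun x => |ψ x|) x₀)

theorem outerProd_mem_maxNorm_smul_setC {p : ℕ} {r : Fin p → ℕ} (hr : ∀ i, 1 ≤ r i)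
    (θ : (k : Fin p) → Fin (r k) → ℝ) :
    outerProd ℝ _ θ ∈ maxNorm (outerProd ℝ _ θ) • setC p r 1 := by
  have : ∀ k, Nonempty (Fin (r k)) := fun k => ⟨⟨0, hr k⟩⟩
  choose xs hxs using fun k => Finite.exists_max fun j => |θ k j|
  set M : Fin p → ℝ := fun k => |θ k (xs k)|
  have hmax : maxNorm (outerProd ℝ _ θ) = ∏ k, M k := by
    rw [maxNorm_eq_abs_of_forall_abs_le _ xs, outerProd_apply, Finset.abs_prod]
    intro x
    simp only [outerProd_apply, Finset.abs_prod]
    exact Finset.prod_le_prod (fun k _ => abs_nonneg _) fun k _ => hxs k (x k)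
  have hθ : θ = fun k => M k • fun j => θ k j / M k := by
    funext k j
    exact (mul_div_cancel_of_imp' fun h => abs_eq_zero.mp
      (le_antisymm (h ▸ hxs k j) (abs_nonneg _))).symm
  have hB : outerProd ℝ _ (fun k j => θ k j / M k) ∈ setB p r 1 := by
    refine ⟨fun k j => θ k j / M k, fun k j => abs_le.mp ?_, fun x => by simp⟩
    rw [abs_div, abs_abs]
    exact div_le_one_of_le₀ (hxs k j) (abs_nonneg _)
  rw [hmax]
  nth_rewrite 1 [hθ]
  rw [MultilinearMap.map_smul_univ]
  exact smul_mem_smul_set (setB_subset_setC p r 1 hB)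

theorem gaugeNorm_le_sum_maxNorm_general (p : ℕ) (r : Fin p → ℕ) (hr : ∀ i, 1 ≤ r i)
    (q : ℕ) (ψk : Fin q → ((i : Fin p) → Fin (r i)) → ℝ)
    (hrank1 : ∀ k, ∃ θ : (j : Fin p) → Fin (r j) → ℝ, ∀ x, ψk k x = ∏ j, θ j (x j))
    (ψ : ((i : Fin p) → Fin (r i)) → ℝ) (hψ : ψ = ∑ k, ψk k) :
    gaugeNorm ψ ≤ ∑ k, maxNorm (ψk k) := by
  have hmem : ∀ k, ψk k ∈ maxNorm (ψk k) • setC p r 1 := by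
    intro k
    obtain ⟨θ, hθ⟩ := hrank1 k
    have hψk : ψk k = outerProd ℝ _ θ := funext fun x => by simp [hθ]
    rw [hψk]
    exact outerProd_mem_maxNorm_smul_setC hr θ
  have hnonneg : ∀ k, 0 ≤ maxNorm (ψk k) := fun k => Real.iSup_nonneg fun _ => abs_nonneg _
  have hC : (setC p r 1).Nonempty :=
    ⟨1, subset_convexHull ℝ _ ⟨fun _ _ => 1, fun _ _ => Or.inr rfl, fun _ => by simp⟩⟩
  refine csInf_le ⟨0, fun _ h => h.1⟩ ⟨Finset.sum_nonneg fun k _ => hnonneg k, ?_⟩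
  rw [hψ]
  exact (convex_convexHull ℝ _).sum_mem_sum_smul hC _ (fun k _ => hnonneg k) fun k _ => hmem k

/-- if `ψ = Σ_{k=1}^q ψ^k` with each `ψ^k` rank-1, then
`‖ψ‖_± ≤ Σ_k ‖ψ^k‖_max`. -/
theorem gaugeNorm_le_sum_maxNorm (p : ℕ) (hp : 1 ≤ p) (r : Fin p → ℕ) (hr : ∀ i, 1 ≤ r i)
    (q : ℕ) (ψk : Fin q → ((i : Fin p) → Fin (r i)) → ℝ)
    (hrank1 : ∀ k, ∃ θ : (j : Fin p) → Fin (r j) → ℝ, ∀ x, ψk k x = ∏ j, θ j (x j))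
    (ψ : ((i : Fin p) → Fin (r i)) → ℝ) (hψ : ψ = ∑ k, ψk k) :
    gaugeNorm ψ ≤ ∑ k, maxNorm (ψk k) :=
  gaugeNorm_le_sum_maxNorm_general p r hr q ψk hrank1 ψ hψ
end
end

section
/- For every λ ≥ 0, S_λ = Ŝ_λ, where Ŝ_λ is the set of tensors ψ for which there exist θ^{(k)} ∈ {-1,1}^{r_k} for k ∈ [p] and real numbers y_{x,k} for x ∈ R, k ∈ [p], satisfying for all x ∈ R: ψ_x = λ·y_{x,1}; y_{x,p} = θ^{(p)}_{x_p}; and for all k ∈ [p-1]: y_{x,k} ≥ -θ^{(k)}_{x_k} - y_{x,k+1} - 1, y_{x,k} ≥ θ^{(k)}_{x_k} + y_{x,k+1} - 1, y_{x,k} ≤ θ^{(k)}_{x_k} - y_{x,k+1} + 1, and y_{x,k} ≤ -θ^{(k)}_{x_k} + y_{x,k+1} + 1. -/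
open Set Pointwise

noncomputable section

/-- The set `Ŝ_λ`: the integer-linear description of `S_λ`, with auxiliary variables
`y_{x,k}` linearizing the partial products via the negated-XOR inequalities. -/
def setShat (p : ℕ) (hp : 0 < p) (r : Fin p → ℕ) (lam : ℝ) :
    Set (((i : Fin p) → Fin (r i)) → ℝ) :=
  {ψ | ∃ (θ : (k : Fin p) → Fin (r k) → ℝ)
        (y : ((i : Fin p) → Fin (r i)) → Fin p → ℝ),
    (∀ k j, θ k j = -1 ∨ θ k j = 1) ∧
    (∀ x, ψ x = lam * y x ⟨0, hp⟩) ∧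
    (∀ x, y x ⟨p - 1, Nat.sub_lt hp Nat.one_pos⟩ =
      θ ⟨p - 1, Nat.sub_lt hp Nat.one_pos⟩ (x ⟨p - 1, Nat.sub_lt hp Nat.one_pos⟩)) ∧
    (∀ x, ∀ k : ℕ, ∀ h : k + 1 < p,
      y x ⟨k, Nat.lt_of_succ_lt h⟩ ≥
          -θ ⟨k, Nat.lt_of_succ_lt h⟩ (x ⟨k, Nat.lt_of_succ_lt h⟩) - y x ⟨k + 1, h⟩ - 1 ∧
      y x ⟨k, Nat.lt_of_succ_lt h⟩ ≥
          θ ⟨k, Nat.lt_of_succ_lt h⟩ (x ⟨k, Nat.lt_of_succ_lt h⟩) + y x ⟨k + 1, h⟩ - 1 ∧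
      y x ⟨k, Nat.lt_of_succ_lt h⟩ ≤
          θ ⟨k, Nat.lt_of_succ_lt h⟩ (x ⟨k, Nat.lt_of_succ_lt h⟩) - y x ⟨k + 1, h⟩ + 1 ∧
      y x ⟨k, Nat.lt_of_succ_lt h⟩ ≤
          -θ ⟨k, Nat.lt_of_succ_lt h⟩ (x ⟨k, Nat.lt_of_succ_lt h⟩) + y x ⟨k + 1, h⟩ + 1)}


lemma prod_pm_one {ι : Type*} {s : Finset ι} {f : ι → ℝ}
    (h : ∀ i ∈ s, f i = -1 ∨ f i = 1) : s.prod f = -1 ∨ s.prod f = 1 := by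
  induction s using Finset.cons_induction with
  | empty => simp
  | cons a s ha ih =>
    rw [Finset.prod_cons]
    rcases h a (Finset.mem_cons_self a s) with h1 | h1 <;>
      rcases ih (fun i hi => h i (Finset.mem_cons_of_mem hi)) with h2 | h2 <;>
      simp [h1, h2]

/-- `S_λ = Ŝ_λ` : the set of scaled sign rank-1 tensors coincides with
its integer-linear-programming description. -/
theorem setS_eq_setShat (p : ℕ) (hp : 0 < p) (r : Fin p → ℕ) (hr : ∀ i, 1 ≤ r i)
    (lam : ℝ) (hlam : 0 ≤ lam) :
    setS p r lam = setShat p hp r lam := by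
  ext ψ
  have hIci0 : Finset.Ici (⟨0, hp⟩ : Fin p) = Finset.univ := by
    ext j; simp [Fin.le_def]
  have hIciLast : Finset.Ici (⟨p - 1, Nat.sub_lt hp Nat.one_pos⟩ : Fin p) =
      {(⟨p - 1, Nat.sub_lt hp Nat.one_pos⟩ : Fin p)} := by
    ext j
    have := j.2
    simp only [Finset.mem_Ici, Finset.mem_singleton, Fin.le_def, Fin.ext_iff]
    omega
  have hIciStep : ∀ (k : ℕ) (h : k + 1 < p),
      Finset.Ici (⟨k, Nat.lt_of_succ_lt h⟩ : Fin p) =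
        insert (⟨k, Nat.lt_of_succ_lt h⟩ : Fin p) (Finset.Ici (⟨k + 1, h⟩ : Fin p)) := by
    intro k h
    ext j
    simp only [Finset.mem_Ici, Finset.mem_insert, Fin.le_def, Fin.ext_iff]
    omega
  have hNotMem : ∀ (k : ℕ) (h : k + 1 < p),
      (⟨k, Nat.lt_of_succ_lt h⟩ : Fin p) ∉ Finset.Ici (⟨k + 1, h⟩ : Fin p) := by
    intro k h
    simp [Fin.le_def]
  constructor
  · rintro ⟨θ, hθ, hψ⟩
    refine ⟨θ, fun x k => ∏ j ∈ Finset.Ici k, θ j (x j), hθ, ?_, ?_, ?_⟩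
    · intro x
      rw [hψ x]
      simp only []
      rw [hIci0]
    · intro x
      simp only []
      rw [hIciLast, Finset.prod_singleton]
    · intro x k h
      simp only []
      rw [hIciStep k h, Finset.prod_insert (hNotMem k h)]
      set a := θ ⟨k, Nat.lt_of_succ_lt h⟩ (x ⟨k, Nat.lt_of_succ_lt h⟩) with ha
      set b := ∏ j ∈ Finset.Ici (⟨k + 1, h⟩ : Fin p), θ j (x j) with hb
      have hbpm : b = -1 ∨ b = 1 := prod_pm_one (fun i _ => hθ i (x i))
      rcases hθ ⟨k, Nat.lt_of_succ_lt h⟩ (x ⟨k, Nat.lt_of_succ_lt h⟩) with h1 | h1 <;>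
        rcases hbpm with h2 | h2 <;>
        rw [← ha] at h1 <;> rw [h1, h2] <;> norm_num
  · rintro ⟨θ, y, hθ, hψ, hlast, hrec⟩
    refine ⟨θ, hθ, ?_⟩
    have key : ∀ x, ∀ d k, k + d = p - 1 → ∀ hkp : k < p,
        y x ⟨k, hkp⟩ = ∏ j ∈ Finset.Ici (⟨k, hkp⟩ : Fin p), θ j (x j) := by
      intro x d
      induction d with
      | zero =>
        intro k hk hkp
        have : k = p - 1 := by omega
        subst this
        rw [hIciLast, Finset.prod_singleton]
        exact hlast x
      | succ d ih =>
        intro k hk hkp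
        have h1 : k + 1 < p := by omega
        obtain ⟨c1, c2, c3, c4⟩ := hrec x k h1
        have hb := ih (k + 1) (by omega) h1
        rw [hIciStep k h1, Finset.prod_insert (hNotMem k h1), ← hb]
        rcases hθ ⟨k, hkp⟩ (x ⟨k, hkp⟩) with h2 | h2 <;>
          rw [show (⟨k, Nat.lt_of_succ_lt h1⟩ : Fin p) = ⟨k, hkp⟩ from rfl] at c1 c2 c3 c4 <;>
          rw [h2] at c1 c2 c3 c4 ⊢ <;> linarith
    intro x
    rw [hψ x, key x (p - 1) 0 (by omega) hp, hIci0]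
end
end

section
/- For every λ ≥ 0, every n ≥ 1, and every choice of sample indices x⟨1⟩, …, x⟨n⟩ ∈ R, the empirical Rademacher average of C_λ is at most 2λ√(ρ/n): (1/2^n) · Σ_{σ ∈ {-1,1}^n} sup_{ψ ∈ C_λ} |(1/n) Σ_{i=1}^n σ_i · ψ_{x⟨i⟩}| ≤ 2λ√(ρ/n), where ρ = r_1 + ⋯ + r_p. In particular, the worst-case Rademacher complexity W(C_λ) = sup over all sample index choices of this quantity satisfies W(C_λ) ≤ 2λ√(ρ/n). -/
open Set Pointwise

noncomputable section

open Finset in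
lemma sum_prod_bool {n : ℕ} (g : Fin n → Bool → ℝ) :
    ∑ σ : Fin n → Bool, ∏ i, g i (σ i) = ∏ i, (g i true + g i false) := by
  rw [← Fintype.prod_sum]
  simp [Fintype.sum_bool]

open Finset in
lemma massart {n : ℕ} (hn : 1 ≤ n) {ι : Type} [Fintype ι] [Nonempty ι]
    (v : ι → Fin n → ℝ) (hv : ∀ j i, |v j i| ≤ 1) (t : ℝ) (ht : 0 < t) :
    (1 / 2 ^ n : ℝ) * ∑ σ : Fin n → Bool,
        Finset.univ.sup' Finset.univ_nonempty
          (fun j => ∑ i, (if σ i then (1:ℝ) else -1) * v j i)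
      ≤ Real.log (Fintype.card ι) / t + t * n / 2 := by
  set F : (Fin n → Bool) → ι → ℝ :=
    fun σ j => ∑ i, (if σ i then (1:ℝ) else -1) * v j i with hF
  set M : ℝ := (1 / 2 ^ n : ℝ) * ∑ σ : Fin n → Bool,
      Finset.univ.sup' Finset.univ_nonempty (F σ) with hM
  have hw : ∑ _σ : Fin n → Bool, (1 / 2 ^ n : ℝ) = 1 := by
    simp [Finset.sum_const, Finset.card_univ]
  -- Jensen
  have jensen : Real.exp (t * M) ≤
      ∑ σ : Fin n → Bool, (1 / 2 ^ n : ℝ) *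
        Real.exp (t * Finset.univ.sup' Finset.univ_nonempty (F σ)) := by
    have := convexOn_exp.map_sum_le (t := Finset.univ)
      (w := fun _σ : Fin n → Bool => (1 / 2 ^ n : ℝ))
      (p := fun σ => t * Finset.univ.sup' Finset.univ_nonempty (F σ))
      (fun _ _ => by positivity) hw (fun _ _ => Set.mem_univ _)
    simp only [smul_eq_mul] at this
    calc Real.exp (t * M) = Real.exp (∑ σ : Fin n → Bool,
          (1 / 2 ^ n : ℝ) * (t * Finset.univ.sup' Finset.univ_nonempty (F σ))) := by
          congr 1
          rw [hM, Finset.mul_sum, Finset.mul_sum]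
          congr 1; ext σ; ring
      _ ≤ _ := this
  -- pointwise: exp of sup ≤ sum of exps
  have step2 : ∀ σ : Fin n → Bool,
      Real.exp (t * Finset.univ.sup' Finset.univ_nonempty (F σ))
        ≤ ∑ j : ι, Real.exp (t * F σ j) := by
    intro σ
    obtain ⟨j0, _, hj0⟩ := Finset.exists_mem_eq_sup' Finset.univ_nonempty (F σ)
    rw [hj0]
    exact Finset.single_le_sum (f := fun j => Real.exp (t * F σ j))
      (fun j _ => (Real.exp_pos _).le) (Finset.mem_univ j0)
  -- mgf bound for each j
  have step3 : ∀ j : ι,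
      (1 / 2 ^ n : ℝ) * ∑ σ : Fin n → Bool, Real.exp (t * F σ j)
        ≤ Real.exp (t ^ 2 * n / 2) := by
    intro j
    have hexp : ∀ σ : Fin n → Bool, Real.exp (t * F σ j)
        = ∏ i, Real.exp (t * ((if σ i then (1:ℝ) else -1) * v j i)) := by
      intro σ
      rw [hF, Finset.mul_sum, Real.exp_sum]
    have hsum : ∑ σ : Fin n → Bool, Real.exp (t * F σ j)
        = ∏ i, (Real.exp (t * v j i) + Real.exp (t * (-(v j i)))) := by
      rw [Finset.sum_congr rfl (fun σ _ => hexp σ)]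
      rw [sum_prod_bool (fun i b => Real.exp (t * ((if b then (1:ℝ) else -1) * v j i)))]
      congr 1; ext i
      norm_num
    rw [hsum]
    have h2 : (1 / 2 ^ n : ℝ) * ∏ i, (Real.exp (t * v j i) + Real.exp (t * (-(v j i))))
        = ∏ i : Fin n, Real.cosh (t * v j i) := by
      have hc : ∀ i : Fin n, Real.cosh (t * v j i)
          = (Real.exp (t * v j i) + Real.exp (t * (-(v j i)))) / 2 := by
        intro i; rw [Real.cosh_eq, mul_neg]
      rw [Finset.prod_congr rfl (fun i _ => hc i), Finset.prod_div_distrib,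
        Finset.prod_const, Finset.card_univ, Fintype.card_fin]
      ring
    rw [h2]
    calc ∏ i : Fin n, Real.cosh (t * v j i)
        ≤ ∏ _i : Fin n, Real.exp (t ^ 2 / 2) := by
          apply Finset.prod_le_prod (fun i _ => (Real.cosh_pos _).le)
          intro i _
          calc Real.cosh (t * v j i) ≤ Real.exp ((t * v j i) ^ 2 / 2) :=
                Real.cosh_le_exp_half_sq _
            _ ≤ Real.exp (t ^ 2 / 2) := by
                apply Real.exp_le_exp.mpr
                have h1 := abs_le.mp (hv j i)
                have hv2 : v j i ^ 2 ≤ 1 := by nlinarith [h1.1, h1.2]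
                have h3 : (t * v j i) ^ 2 ≤ t ^ 2 := by
                  calc (t * v j i) ^ 2 = t ^ 2 * (v j i) ^ 2 := by ring
                    _ ≤ t ^ 2 * 1 := by nlinarith [sq_nonneg t]
                    _ = t ^ 2 := by ring
                linarith
      _ = Real.exp (t ^ 2 * n / 2) := by
          rw [Finset.prod_const, ← Real.exp_nat_mul, Finset.card_univ, Fintype.card_fin]
          ring_nf
  -- assemble
  have key : Real.exp (t * M) ≤ (Fintype.card ι : ℝ) * Real.exp (t ^ 2 * n / 2) := by
    calc Real.exp (t * M)
        ≤ ∑ σ : Fin n → Bool, (1 / 2 ^ n : ℝ) *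
            Real.exp (t * Finset.univ.sup' Finset.univ_nonempty (F σ)) := jensen
      _ ≤ ∑ σ : Fin n → Bool, (1 / 2 ^ n : ℝ) * ∑ j : ι, Real.exp (t * F σ j) := by
          apply Finset.sum_le_sum
          intro σ _
          exact mul_le_mul_of_nonneg_left (step2 σ) (by positivity)
      _ = ∑ j : ι, (1 / 2 ^ n : ℝ) * ∑ σ : Fin n → Bool, Real.exp (t * F σ j) := by
          rw [← Finset.mul_sum, Finset.sum_comm, Finset.mul_sum]
      _ ≤ ∑ _j : ι, Real.exp (t ^ 2 * n / 2) := Finset.sum_le_sum (fun j _ => step3 j)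
      _ = (Fintype.card ι : ℝ) * Real.exp (t ^ 2 * n / 2) := by
          rw [Finset.sum_const, Finset.card_univ, nsmul_eq_mul]
  have hcard : (1 : ℝ) ≤ (Fintype.card ι : ℝ) := by
    exact_mod_cast Fintype.card_pos
  have key2 : t * M ≤ Real.log (Fintype.card ι) + t ^ 2 * n / 2 := by
    have : Real.exp (t * M) ≤ Real.exp (Real.log (Fintype.card ι) + t ^ 2 * n / 2) := by
      rw [Real.exp_add, Real.exp_log (by linarith)]
      exact key
    exact Real.exp_le_exp.mp this
  have hfin : M ≤ (Real.log (Fintype.card ι) + t ^ 2 * n / 2) / t :=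
    (le_div_iff₀ ht).mpr (by linarith [key2])
  calc M ≤ (Real.log (Fintype.card ι) + t ^ 2 * n / 2) / t := hfin
    _ = Real.log (Fintype.card ι) / t + t * n / 2 := by
        field_simp

/-- for every choice of sample indices, the empirical Rademacher
average of `C_λ` is at most `2λ√(ρ/n)`, where `ρ = Σ r_i`; hence the worst-case
Rademacher complexity satisfies the same bound. -/
theorem rademacher_complexity_setC_le (p : ℕ) (hp : 1 ≤ p) (r : Fin p → ℕ)
    (hr : ∀ i, 1 ≤ r i) (lam : ℝ) (hlam : 0 ≤ lam) (n : ℕ) (hn : 1 ≤ n)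
    (x : Fin n → (i : Fin p) → Fin (r i)) :
    (1 / 2 ^ n : ℝ) * ∑ σ : Fin n → Bool,
        sSup {t : ℝ | ∃ ψ ∈ setC p r lam,
          t = |(1 / n : ℝ) * ∑ i, (if σ i then (1 : ℝ) else -1) * ψ (x i)|}
      ≤ 2 * lam * Real.sqrt ((∑ i, r i : ℕ) / (n : ℝ)) := by
  classical
  have hn0 : (0:ℝ) < n := by exact_mod_cast hn
  set ρ : ℕ := ∑ i, r i with hρ
  have hρ1 : 1 ≤ ρ := by
    calc 1 ≤ p := hp
      _ = ∑ _i : Fin p, 1 := by simp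
      _ ≤ ρ := Finset.sum_le_sum (fun i _ => hr i)
  have hρ0 : (0:ℝ) < ρ := by exact_mod_cast hρ1
  -- index set and sign vectors
  set ι := (((k : Fin p) → Fin (r k) → Bool) × Bool) with hι
  haveI : Nonempty ι := ⟨⟨fun _ _ => true, true⟩⟩
  set v : ι → Fin n → ℝ := fun jb i =>
    (if jb.2 then (1:ℝ) else -1) * ∏ k, (if jb.1 k (x i k) then (1:ℝ) else -1) with hv
  have hvabs : ∀ jb i, |v jb i| ≤ 1 := by
    intro jb i
    rw [hv]
    simp only
    rw [abs_mul, Finset.abs_prod]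
    have h1 : |if jb.2 then (1:ℝ) else -1| = 1 := by rcases jb.2 <;> simp
    have h2 : ∀ k ∈ Finset.univ, |if jb.1 k (x i k) then (1:ℝ) else -1| = 1 := by
      intro k _; rcases jb.1 k (x i k) <;> simp
    rw [h1, Finset.prod_congr rfl h2]
    simp
  have hvneg : ∀ (j : (k : Fin p) → Fin (r k) → Bool) (i : Fin n),
      v (j, false) i = - v (j, true) i := by
    intro j i; rw [hv]; simp
  set S : (Fin n → Bool) → ℝ := fun σ =>
    Finset.univ.sup' Finset.univ_nonempty
      (fun jb : ι => ∑ i, (if σ i then (1:ℝ) else -1) * v jb i) with hS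
  have hSle : ∀ (σ : Fin n → Bool) (jb : ι),
      (∑ i, (if σ i then (1:ℝ) else -1) * v jb i) ≤ S σ := by
    intro σ jb
    rw [hS]
    exact Finset.le_sup' (fun jb : ι => ∑ i, (if σ i then (1:ℝ) else -1) * v jb i)
      (Finset.mem_univ jb)
  have habsle : ∀ (σ : Fin n → Bool) (j : (k : Fin p) → Fin (r k) → Bool),
      |∑ i, (if σ i then (1:ℝ) else -1) * v (j, true) i| ≤ S σ := by
    intro σ j
    rw [abs_le]
    constructor
    · have h := hSle σ (j, false)
      have : (∑ i, (if σ i then (1:ℝ) else -1) * v (j, false) i)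
          = - ∑ i, (if σ i then (1:ℝ) else -1) * v (j, true) i := by
        rw [← Finset.sum_neg_distrib]
        exact Finset.sum_congr rfl (fun i _ => by rw [hvneg j i]; ring)
      linarith [this ▸ h]
    · exact hSle σ (j, true)
  have hSnn : ∀ σ : Fin n → Bool, 0 ≤ S σ := by
    intro σ
    exact le_trans (abs_nonneg _) (habsle σ (fun _ _ => true))
  -- pointwise claim over the convex hull
  have claim : ∀ (σ : Fin n → Bool) (ψ : ((i : Fin p) → Fin (r i)) → ℝ),
      ψ ∈ setC p r lam →
      |(1 / n : ℝ) * ∑ i, (if σ i then (1 : ℝ) else -1) * ψ (x i)| ≤ (lam / n) * S σ := by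
    intro σ
    have hc0 : 0 ≤ (lam / n) * S σ := by
      apply mul_nonneg (div_nonneg hlam hn0.le) (hSnn σ)
    have hsub : setC p r lam ⊆
        {ψ | |(1 / n : ℝ) * ∑ i, (if σ i then (1 : ℝ) else -1) * ψ (x i)| ≤ (lam / n) * S σ} := by
      apply convexHull_min
      · rintro ψ ⟨θ, hθ, hψ⟩
        simp only [Set.mem_setOf_eq]
        set θb : (k : Fin p) → Fin (r k) → Bool := fun k j => θ k j = 1 with hθb
        have hθbv : ∀ k j, (if θb k j then (1:ℝ) else -1) = θ k j := by
          intro k j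
          by_cases h : θ k j = 1
          · simp [hθb, h]
          · rcases hθ k j with h' | h'
            · simp only [hθb]
              rw [if_neg (by simpa using h)]
              exact h'.symm
            · exact absurd h' h
        have hval : ∀ i, ψ (x i) = lam * v (θb, true) i := by
          intro i
          rw [hψ (x i), hv]
          simp only [if_true, one_mul]
          congr 1
          exact (Finset.prod_congr rfl (fun k _ => hθbv k (x i k))).symm
        have hrw : (1 / n : ℝ) * ∑ i, (if σ i then (1 : ℝ) else -1) * ψ (x i)
            = (lam / n) * ∑ i, (if σ i then (1 : ℝ) else -1) * v (θb, true) i := by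
          rw [Finset.sum_congr rfl (fun i _ => by rw [hval i])]
          rw [Finset.mul_sum, Finset.mul_sum]
          exact Finset.sum_congr rfl (fun i _ => by ring)
        rw [hrw, abs_mul, abs_of_nonneg (div_nonneg hlam hn0.le)]
        exact mul_le_mul_of_nonneg_left (habsle σ θb) (div_nonneg hlam hn0.le)
      · rintro ψ hψ φ hφ a b ha hb hab
        simp only [Set.mem_setOf_eq] at hψ hφ ⊢
        have happ : ∀ i, (a • ψ + b • φ) (x i) = a * ψ (x i) + b * φ (x i) := by
          intro i; simp [smul_eq_mul]
        have hrw : (1 / n : ℝ) * ∑ i, (if σ i then (1 : ℝ) else -1) * (a • ψ + b • φ) (x i)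
            = a * ((1 / n : ℝ) * ∑ i, (if σ i then (1 : ℝ) else -1) * ψ (x i))
              + b * ((1 / n : ℝ) * ∑ i, (if σ i then (1 : ℝ) else -1) * φ (x i)) := by
          rw [Finset.sum_congr rfl (fun i _ => by rw [happ i])]
          simp only [Finset.mul_sum]
          rw [← Finset.sum_add_distrib]
          exact Finset.sum_congr rfl (fun i _ => by ring)
        rw [hrw]
        calc |a * ((1 / n : ℝ) * ∑ i, (if σ i then (1 : ℝ) else -1) * ψ (x i))
              + b * ((1 / n : ℝ) * ∑ i, (if σ i then (1 : ℝ) else -1) * φ (x i))|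
            ≤ |a * ((1 / n : ℝ) * ∑ i, (if σ i then (1 : ℝ) else -1) * ψ (x i))|
              + |b * ((1 / n : ℝ) * ∑ i, (if σ i then (1 : ℝ) else -1) * φ (x i))| :=
              abs_add_le _ _
          _ = a * |(1 / n : ℝ) * ∑ i, (if σ i then (1 : ℝ) else -1) * ψ (x i)|
              + b * |(1 / n : ℝ) * ∑ i, (if σ i then (1 : ℝ) else -1) * φ (x i)| := by
              rw [abs_mul a, abs_mul b, abs_of_nonneg ha, abs_of_nonneg hb]
          _ ≤ a * ((lam / n) * S σ) + b * ((lam / n) * S σ) := by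
              gcongr
          _ = (lam / n) * S σ := by rw [← add_mul, hab, one_mul]
    intro ψ hψ
    exact hsub hψ
  -- sSup bound per σ
  have hsup : ∀ σ : Fin n → Bool,
      sSup {t : ℝ | ∃ ψ ∈ setC p r lam,
          t = |(1 / n : ℝ) * ∑ i, (if σ i then (1 : ℝ) else -1) * ψ (x i)|}
        ≤ (lam / n) * S σ := by
    intro σ
    apply Real.sSup_le
    · rintro t ⟨ψ, hψ, rfl⟩
      exact claim σ ψ hψ
    · exact mul_nonneg (div_nonneg hlam hn0.le) (hSnn σ)
  -- sum up and apply massart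
  set tt : ℝ := 2 * Real.sqrt ((ρ : ℝ) / n) with ht'
  have hsq : Real.sqrt ((ρ : ℝ) / n) ^ 2 = (ρ : ℝ) / n :=
    Real.sq_sqrt (by positivity)
  have hsqpos : 0 < Real.sqrt ((ρ : ℝ) / n) := Real.sqrt_pos.mpr (by positivity)
  have htpos : 0 < tt := by rw [ht']; positivity
  have hmass := massart hn v hvabs tt htpos
  have hcardn : Fintype.card ι = 2 ^ (ρ + 1) := by
    show Fintype.card ((((k : Fin p) → Fin (r k) → Bool)) × Bool) = 2 ^ (ρ + 1)
    rw [Fintype.card_prod, Fintype.card_bool, Fintype.card_pi]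
    have hcards : ∀ k : Fin p, Fintype.card (Fin (r k) → Bool) = 2 ^ (r k) := by
      intro k; simp [Fintype.card_fun]
    rw [Finset.prod_congr rfl (fun k _ => hcards k), Finset.prod_pow_eq_pow_sum, ← hρ, pow_succ]
  have hcard : (Fintype.card ι : ℝ) = 2 ^ (ρ + 1) := by
    rw [hcardn]; push_cast; ring
  have hlog : Real.log (Fintype.card ι) ≤ 2 * ρ := by
    rw [hcard, Real.log_pow]
    have h2 : Real.log 2 ≤ 1 := by
      have := Real.log_le_sub_one_of_pos (by norm_num : (0:ℝ) < 2)
      linarith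
    have : ((ρ:ℝ) + 1) * Real.log 2 ≤ ((ρ:ℝ) + 1) * 1 := by
      apply mul_le_mul_of_nonneg_left h2 (by positivity)
    push_cast
    have hr1 : (1:ℝ) ≤ ρ := by exact_mod_cast hρ1
    nlinarith
  calc (1 / 2 ^ n : ℝ) * ∑ σ : Fin n → Bool,
        sSup {t : ℝ | ∃ ψ ∈ setC p r lam,
          t = |(1 / n : ℝ) * ∑ i, (if σ i then (1 : ℝ) else -1) * ψ (x i)|}
      ≤ (1 / 2 ^ n : ℝ) * ∑ σ : Fin n → Bool, (lam / n) * S σ := by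
        apply mul_le_mul_of_nonneg_left _ (by positivity)
        exact Finset.sum_le_sum (fun σ _ => hsup σ)
    _ = (lam / n) * ((1 / 2 ^ n : ℝ) * ∑ σ : Fin n → Bool, S σ) := by
        rw [← Finset.mul_sum]; ring
    _ ≤ (lam / n) * (Real.log (Fintype.card ι) / tt + tt * n / 2) := by
        apply mul_le_mul_of_nonneg_left _ (div_nonneg hlam hn0.le)
        exact hmass
    _ ≤ (lam / n) * (2 * ρ / tt + tt * n / 2) := by
        apply mul_le_mul_of_nonneg_left _ (div_nonneg hlam hn0.le)
        gcongr
    _ = 2 * lam * Real.sqrt ((ρ : ℝ) / n) := by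
        rw [ht']
        set a := Real.sqrt ((ρ : ℝ) / n) with ha
        have hρa : (ρ : ℝ) = a ^ 2 * n := by
          rw [hsq]; field_simp
        rw [hρa]
        field_simp
        ring
end
end
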